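/- arXiv:2403.00620 — 2 statements merged into one kernel-verified Lean document; each statement's English description precedes it below -/
import Mathlib

section
/- Let (X,d) be a metric space and m a Borel measure on X. Let c > 0, let T : L¹(X,m) → L¹(X,m) be a linear operator, and let S : L∞(X,m) → L∞(X,m) satisfy ∫_X g·Tu dm = ∫_X (Sg)·u dm for all u ∈ L¹(X,m), g ∈ L∞(X,m), with Sg admitting a Lipschitz representative of Lipschitz constant at most c·‖g‖_{L∞} for every g. Let f ∈ L¹(X,m), λ > 0 and t > 0 be such that Tf = e^{−λt}·f m-a.e. Then for every real number W such that ∫_X h·f dm ≤ W for every bounded 1-Lipschitz h : X → ℝ, one has W ≥ (e^{−λt}/c)·‖f‖_{L¹}. -/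
open MeasureTheory Filter

/-!
Test the eigenvalue equation against `g = sign f`, which lies in `L∞` with `‖g‖ ≤ 1`: by duality
`∫ (S g) f = ∫ g (T f) = e^{-λt} ‖f‖₁`. The function `S g` has a `c`-Lipschitz representative,
which may be truncated at height `‖S g‖_∞` without changing it a.e.; divided by `c` it becomes a
bounded `1`-Lipschitz test function, so `W ≥ (e^{-λt}/c) ‖f‖₁`.
-/

section Sign

variable {α : Type*} [Ring α] [LinearOrder α] [IsStrictOrderedRing α]

theorem abs_sign_cast_le_one (r : α) : |(SignType.sign r : α)| ≤ 1 := by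
  rcases lt_trichotomy r 0 with hr | hr | hr <;> simp [hr]

theorem monotone_sign_cast : Monotone fun r : α => (SignType.sign r : α) := by
  intro a b hab
  have hsign := SignType.sign.monotone hab
  cases ha : SignType.sign a <;> cases hb : SignType.sign b <;> simp_all

end Sign

theorem abs_clamp_sub_clamp_le {α : Type*} [AddCommGroup α] [LinearOrder α] [IsOrderedAddMonoid α]
    (a b x y : α) : |max a (min b x) - max a (min b y)| ≤ |x - y| :=
  (abs_max_sub_max_le_max _ _ _ _).trans <| max_le (by simp) <|
    (abs_min_sub_min_le_max _ _ _ _).trans <| max_le (by simp) le_rfl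

theorem exists_bounded_lipschitz_ae_eq {X : Type*} [PseudoMetricSpace X] [MeasurableSpace X]
    {μ : Measure X} {h : X → ℝ} {K M : ℝ} (hM : 0 ≤ M)
    (hlip : ∀ x y, |h x - h y| ≤ K * dist x y) (hbound : ∀ᵐ x ∂μ, |h x| ≤ M) :
    ∃ k : X → ℝ, (∀ x, |k x| ≤ M) ∧ (∀ x y, |k x - k y| ≤ K * dist x y) ∧ k =ᵐ[μ] h := by
  refine ⟨fun x => max (-M) (min M (h x)), fun x => ?_,
    fun x y => (abs_clamp_sub_clamp_le _ _ _ _).trans (hlip x y), ?_⟩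
  · exact abs_le.2 ⟨le_max_left _ _, max_le (by linarith) (min_le_left _ _)⟩
  · filter_upwards [hbound] with x hx
    rw [abs_le] at hx
    simp only [min_eq_right hx.2, max_eq_right hx.1]

namespace MeasureTheory

variable {α E : Type*} {m : MeasurableSpace α} {μ : Measure α} [NormedAddCommGroup E]

theorem Lp.ae_norm_le_norm_top (f : Lp E ⊤ μ) : ∀ᵐ x ∂μ, ‖f x‖ ≤ ‖f‖ := by
  have hfin : eLpNormEssSup f μ ≠ ⊤ := by
    simpa only [eLpNorm_exponent_top] using (Lp.eLpNorm_lt_top f).ne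
  filter_upwards [ae_le_eLpNormEssSup (f := ⇑f) (μ := μ)] with x hx
  rw [Lp.norm_def, eLpNorm_exponent_top]
  simpa using ENNReal.toReal_mono hfin hx

theorem Lp.norm_toLp_top_le {g : α → E} (hg : MemLp g ⊤ μ) {C : ℝ} (hC : 0 ≤ C)
    (hbound : ∀ᵐ x ∂μ, ‖g x‖ ≤ C) : ‖hg.toLp g‖ ≤ C := by
  rw [Lp.norm_toLp, eLpNorm_exponent_top]
  exact ENNReal.toReal_le_of_le_ofReal hC (eLpNormEssSup_le_of_ae_bound hbound)

theorem memLp_top_sign_comp {f : α → ℝ} (hf : AEStronglyMeasurable f μ) :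
    MemLp (fun x => (SignType.sign (f x) : ℝ)) ⊤ μ :=
  memLp_top_of_bound
    (monotone_sign_cast.measurable.comp_aemeasurable hf.aemeasurable).aestronglyMeasurable 1
    (ae_of_all _ fun x => abs_sign_cast_le_one (f x))

theorem integral_sign_toLp_mul_self {f : α → ℝ}
    (hf : MemLp (fun x => (SignType.sign (f x) : ℝ)) ⊤ μ) :
    ∫ x, hf.toLp _ x * f x ∂μ = ∫ x, |f x| ∂μ := by
  refine integral_congr_ae ?_
  filter_upwards [hf.coeFn_toLp] with x hx
  rw [hx, sign_mul_self]

theorem integral_adjoint_mul_of_eigenfunction {T : Lp ℝ 1 μ → Lp ℝ 1 μ} {S : Lp ℝ ⊤ μ → Lp ℝ ⊤ μ}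
    (hadj : ∀ (u : Lp ℝ 1 μ) (g : Lp ℝ ⊤ μ), ∫ x, g x * (T u) x ∂μ = ∫ x, (S g) x * u x ∂μ)
    {f : α → ℝ} (hf : Integrable f μ) {a : ℝ} (heig : ⇑(T (hf.toL1 f)) =ᵐ[μ] fun x => a * f x)
    (g : Lp ℝ ⊤ μ) : ∫ x, (S g) x * f x ∂μ = a * ∫ x, g x * f x ∂μ := by
  calc ∫ x, (S g) x * f x ∂μ = ∫ x, (S g) x * (hf.toL1 f) x ∂μ := by
        refine integral_congr_ae ?_
        filter_upwards [hf.coeFn_toL1] with x hx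
        rw [hx]
    _ = ∫ x, g x * (T (hf.toL1 f)) x ∂μ := (hadj _ g).symm
    _ = a * ∫ x, g x * f x ∂μ := by
        rw [← integral_const_mul]
        refine integral_congr_ae ?_
        filter_upwards [heig] with x hx
        rw [hx]
        ring

end MeasureTheory

theorem stmt10_general {X : Type*} [MetricSpace X] [MeasurableSpace X]
    (μ : Measure X) (c : ℝ) (hc : 0 < c)
    (T : Lp ℝ 1 μ →ₗ[ℝ] Lp ℝ 1 μ)
    (S : Lp ℝ ⊤ μ → Lp ℝ ⊤ μ)
    (hadj : ∀ (u : Lp ℝ 1 μ) (g : Lp ℝ ⊤ μ),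
      ∫ x, g x * (T u) x ∂μ = ∫ x, (S g) x * u x ∂μ)
    (hSlip : ∀ g : Lp ℝ ⊤ μ, ∃ h : X → ℝ,
      (∀ x y, |h x - h y| ≤ c * ‖g‖ * dist x y) ∧ ⇑(S g) =ᵐ[μ] h)
    (f : X → ℝ) (hf1 : Integrable f μ)
    (lam t : ℝ)
    (heig : ⇑(T (hf1.toL1 f)) =ᵐ[μ] fun x => Real.exp (-(lam * t)) * f x)
    (W : ℝ)
    (hW : ∀ h : X → ℝ, (∃ Cb : ℝ, ∀ x, |h x| ≤ Cb) →
      (∀ x y, |h x - h y| ≤ dist x y) → ∫ x, h x * f x ∂μ ≤ W) :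
    (Real.exp (-(lam * t)) / c) * ∫ x, |f x| ∂μ ≤ W := by
  have hsign := memLp_top_sign_comp hf1.aestronglyMeasurable
  set g := hsign.toLp _
  have hg : ‖g‖ ≤ 1 :=
    Lp.norm_toLp_top_le hsign zero_le_one (ae_of_all _ fun x => abs_sign_cast_le_one (f x))
  obtain ⟨h, hlip, hSg⟩ := hSlip g
  have hlip_c : ∀ x y, |h x - h y| ≤ c * dist x y := fun x y =>
    (hlip x y).trans <| by gcongr; exact mul_le_of_le_one_right hc.le hg
  have hh_bdd : ∀ᵐ x ∂μ, |h x| ≤ ‖S g‖ := by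
    filter_upwards [Lp.ae_norm_le_norm_top (S g), hSg] with x hx hxh
    rwa [← hxh]
  obtain ⟨k, hk_bdd, hk_lip, hkh⟩ := exists_bounded_lipschitz_ae_eq (norm_nonneg _) hlip_c hh_bdd
  have hpair : ∫ x, k x * f x ∂μ = Real.exp (-(lam * t)) * ∫ x, |f x| ∂μ := by
    rw [← integral_sign_toLp_mul_self hsign,
      ← integral_adjoint_mul_of_eigenfunction hadj hf1 heig g]
    refine integral_congr_ae ?_
    filter_upwards [hkh, hSg] with x hkx hSx
    rw [hkx, hSx]
  calc Real.exp (-(lam * t)) / c * ∫ x, |f x| ∂μ = ∫ x, k x / c * f x ∂μ := by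
        rw [div_mul_eq_mul_div, ← hpair, ← integral_div]
        simp only [div_mul_eq_mul_div]
    _ ≤ W := by
        refine hW _ ⟨‖S g‖ / c, fun x => ?_⟩ fun x y => ?_
        · rw [abs_div, abs_of_pos hc]
          gcongr
          exact hk_bdd x
        · rw [← sub_div, abs_div, abs_of_pos hc, div_le_iff₀' hc]
          exact hk_lip x y

/-- inequality (eq:W1_eigen_impl) of Theorem th:per nodal set.
Let `μ` be a Borel measure on a metric space, `T : L¹ → L¹` linear, and `S : L∞ → L∞`
its adjoint with the `L∞`-to-Lipschitz property with constant `c`. Let `f ∈ L¹`,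
`λ, t > 0` with `Tf = e^{−λt}·f` a.e. Then for every upper bound `W` of `∫ h·f dμ` over
bounded `1`-Lipschitz `h`, one has `W ≥ (e^{−λt}/c)·‖f‖_{L¹}`. -/
theorem stmt10 {X : Type*} [MetricSpace X] [MeasurableSpace X] [BorelSpace X]
    (μ : Measure X) (c : ℝ) (hc : 0 < c)
    (T : Lp ℝ 1 μ →ₗ[ℝ] Lp ℝ 1 μ)
    (S : Lp ℝ ⊤ μ → Lp ℝ ⊤ μ)
    (hadj : ∀ (u : Lp ℝ 1 μ) (g : Lp ℝ ⊤ μ),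
      ∫ x, g x * (T u) x ∂μ = ∫ x, (S g) x * u x ∂μ)
    (hSlip : ∀ g : Lp ℝ ⊤ μ, ∃ h : X → ℝ,
      (∀ x y, |h x - h y| ≤ c * ‖g‖ * dist x y) ∧ ⇑(S g) =ᵐ[μ] h)
    (f : X → ℝ) (hf1 : Integrable f μ)
    (lam t : ℝ) (hlam : 0 < lam) (ht : 0 < t)
    (heig : ⇑(T (hf1.toL1 f)) =ᵐ[μ] fun x => Real.exp (-(lam * t)) * f x)
    (W : ℝ)
    (hW : ∀ h : X → ℝ, (∃ Cb : ℝ, ∀ x, |h x| ≤ Cb) →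
      (∀ x y, |h x - h y| ≤ dist x y) → ∫ x, h x * f x ∂μ ≤ W) :
    (Real.exp (-(lam * t)) / c) * ∫ x, |f x| ∂μ ≤ W :=
  stmt10_general μ c hc T S hadj hSlip f hf1 lam t heig W hW
end

section
/- Let (X,d) be a metric space and m a finite Borel measure on X. Let T : L¹(X,m) → L¹(X,m) be a linear operator which is positivity-preserving, mass-preserving (∫ Tu dm = ∫ u dm for all u ∈ L¹), satisfies the maximum principle (for every constant β ∈ ℝ, u ≤ β a.e. implies Tu ≤ β a.e.), and is ultracontractive with constant θ > 0, i.e. ‖Tu‖_{L∞} ≤ θ·‖u‖_{L¹} for all u ∈ L¹(X,m). Let f ∈ L∞(X,m) with ‖f‖_{L¹} > 0, λ > 0 and t > 0 be such that Tf = e^{−λt}·f m-a.e., and let K ≥ 0 satisfy ‖χ_{{f>0}} − T(χ_{{f>0}})‖_{L¹} ≤ K. Then K ≥ e^{−λt}(1 − e^{−λt})²/(4θ). -/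
/-!
Let `a = e^{-λt}`, `χ` the indicator of `{f > 0}` and `C = ‖f‖_∞`, which is finite because
`a • f = T f` is bounded by ultracontractivity, with `a C ≤ θ ‖f‖₁`. Positivity gives
`T f⁺ ≤ C T χ` and the maximum principle gives `T f⁻ ≤ C (1 - T χ)`, so pointwise
`(1 - χ) T f⁺ + χ T f⁻ ≤ C |χ - T χ|`. As `T f⁺ - T f⁻ = a f` and `χ f = f⁺`, the left-hand side
is `T f⁺ - a f⁺`, whose integral is `(1 - a) ∫ f⁺ = (1 - a) ‖f‖₁ / 2`, since `∫ f = 0` by mass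
preservation. Eliminating `C` between the two inequalities gives `a (1 - a) ≤ 2 θ K`, which
implies the claim.
-/

open MeasureTheory Filter

lemma ae_abs_le_toReal_eLpNorm_top {X : Type*} [MeasurableSpace X] {μ : Measure X} {f : X → ℝ}
    (hf : eLpNorm f ⊤ μ ≠ ⊤) : ∀ᵐ x ∂μ, |f x| ≤ (eLpNorm f ⊤ μ).toReal := by
  filter_upwards [ae_le_eLpNormEssSup (f := f) (μ := μ)] with x hx
  rw [← Real.norm_eq_abs, ← toReal_enorm]
  exact ENNReal.toReal_mono hf (by rwa [eLpNorm_exponent_top])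

section PositiveOperator

variable {X : Type*} [MeasurableSpace X] {μ : Measure X} {T : Lp ℝ 1 μ →ₗ[ℝ] Lp ℝ 1 μ}

lemma monotone_of_ae_nonneg
    (hTpos : ∀ u : Lp ℝ 1 μ, (0 : X → ℝ) ≤ᵐ[μ] ⇑u → (0 : X → ℝ) ≤ᵐ[μ] ⇑(T u)) :
    Monotone T := by
  intro u v huv
  have h := hTpos (v - u) ((Lp.coeFn_nonneg _).2 (sub_nonneg.2 huv))
  rwa [Lp.coeFn_nonneg, map_sub, sub_nonneg] at h

lemma ae_le_const_mul_of_ae_le_const_mul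
    (hTpos : ∀ u : Lp ℝ 1 μ, (0 : X → ℝ) ≤ᵐ[μ] ⇑u → (0 : X → ℝ) ≤ᵐ[μ] ⇑(T u))
    {g h : X → ℝ} (hg : Integrable g μ) (hh : Integrable h μ) {c : ℝ}
    (hgh : g ≤ᵐ[μ] fun x => c * h x) :
    ⇑(T (hg.toL1 g)) ≤ᵐ[μ] fun x => c * T (hh.toL1 h) x := by
  have hle : hg.toL1 g ≤ c • hh.toL1 h := by
    rw [← Lp.coeFn_le]
    filter_upwards [hg.coeFn_toL1, Lp.coeFn_smul c (hh.toL1 h), hh.coeFn_toL1, hgh]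
      with x hgx hsmul hhx hx
    rwa [hsmul, Pi.smul_apply, hgx, hhx, smul_eq_mul]
  filter_upwards [(Lp.coeFn_le _ _).2 (monotone_of_ae_nonneg hTpos hle),
    Lp.coeFn_smul c (T (hh.toL1 h))] with x hx hsmul
  rwa [map_smul, hsmul, Pi.smul_apply, smul_eq_mul] at hx

lemma ae_add_const_mul_le_of_ae_add_const_mul_le
    (hTmax : ∀ (β : ℝ) (u : Lp ℝ 1 μ), ⇑u ≤ᵐ[μ] (fun _ => β) → ⇑(T u) ≤ᵐ[μ] (fun _ => β))
    {g h : X → ℝ} (hg : Integrable g μ) (hh : Integrable h μ) {c : ℝ}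
    (hgh : ∀ᵐ x ∂μ, g x + c * h x ≤ c) :
    ∀ᵐ x ∂μ, T (hg.toL1 g) x + c * T (hh.toL1 h) x ≤ c := by
  have hu : ⇑(hg.toL1 g + c • hh.toL1 h) ≤ᵐ[μ] fun _ => c := by
    filter_upwards [Lp.coeFn_add (hg.toL1 g) (c • hh.toL1 h), Lp.coeFn_smul c (hh.toL1 h),
      hg.coeFn_toL1, hh.coeFn_toL1, hgh] with x hadd hsmul hgx hhx hx
    rwa [hadd, Pi.add_apply, hsmul, Pi.smul_apply, hgx, hhx, smul_eq_mul]
  filter_upwards [hTmax c _ hu, Lp.coeFn_add (T (hg.toL1 g)) (c • T (hh.toL1 h)),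
    Lp.coeFn_smul c (T (hh.toL1 h))] with x hx hadd hsmul
  rwa [map_add, map_smul, hadd, Pi.add_apply, hsmul, Pi.smul_apply, smul_eq_mul] at hx

lemma integral_eq_zero_of_ae_eq_const_mul
    (hTmass : ∀ u : Lp ℝ 1 μ, ∫ x, (T u) x ∂μ = ∫ x, u x ∂μ)
    {f : X → ℝ} (hf : Integrable f μ) {a : ℝ} (ha : a ≠ 1)
    (heig : ⇑(T (hf.toL1 f)) =ᵐ[μ] fun x => a * f x) :
    ∫ x, f x ∂μ = 0 := by
  have h := hTmass (hf.toL1 f)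
  rw [integral_congr_ae heig, integral_congr_ae hf.coeFn_toL1, integral_const_mul] at h
  have : (a - 1) * ∫ x, f x ∂μ = 0 := by rw [sub_mul, h, one_mul, sub_self]
  exact (mul_eq_zero.1 this).resolve_left (sub_ne_zero.2 ha)

lemma ae_posPart_sub_negPart_eq_const_mul {f : X → ℝ} (hf : Integrable f μ) {a : ℝ}
    (heig : ⇑(T (hf.toL1 f)) =ᵐ[μ] fun x => a * f x) :
    ∀ᵐ x ∂μ, T (hf.pos_part.toL1 fun x => (f x)⁺) x - T (hf.neg_part.toL1 fun x => (f x)⁻) x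
      = a * f x := by
  have hsplit : hf.toL1 f =
      hf.pos_part.toL1 (fun x => (f x)⁺) - hf.neg_part.toL1 (fun x => (f x)⁻) := by
    rw [← Integrable.toL1_sub, Integrable.toL1_eq_toL1_iff]
    exact Eventually.of_forall fun x => (posPart_sub_negPart (f x)).symm
  filter_upwards [heig, Lp.coeFn_sub (T (hf.pos_part.toL1 fun x => (f x)⁺))
    (T (hf.neg_part.toL1 fun x => (f x)⁻))] with x hx hsub
  rw [← hx, hsplit, map_sub, hsub, Pi.sub_apply]

lemma ae_sub_mul_posPart_le_mul_abs_indicator_sub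
    (hTpos : ∀ u : Lp ℝ 1 μ, (0 : X → ℝ) ≤ᵐ[μ] ⇑u → (0 : X → ℝ) ≤ᵐ[μ] ⇑(T u))
    (hTmax : ∀ (β : ℝ) (u : Lp ℝ 1 μ), ⇑u ≤ᵐ[μ] (fun _ => β) → ⇑(T u) ≤ᵐ[μ] (fun _ => β))
    {f : X → ℝ} (hf : Integrable f μ) {C : ℝ} (hC : 0 ≤ C) (hfC : ∀ᵐ x ∂μ, |f x| ≤ C)
    {a : ℝ} (heig : ⇑(T (hf.toL1 f)) =ᵐ[μ] fun x => a * f x)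
    (hχ : Integrable (({x | 0 < f x}).indicator (fun _ => (1 : ℝ))) μ) :
    ∀ᵐ x ∂μ, T (hf.pos_part.toL1 fun x => (f x)⁺) x - a * (f x)⁺ ≤
      C * |({x | 0 < f x}).indicator (fun _ => (1 : ℝ)) x - T (hχ.toL1 _) x| := by
  set χ := ({x | 0 < f x}).indicator (fun _ => (1 : ℝ))
  set g := ⇑(T (hχ.toL1 χ))
  have hpos : ∀ᵐ x ∂μ, T (hf.pos_part.toL1 fun x => (f x)⁺) x ≤ C * g x := by
    refine ae_le_const_mul_of_ae_le_const_mul hTpos _ _ ?_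
    filter_upwards [hfC] with x hx
    by_cases hfx : 0 < f x
    · simpa [χ, hfx, posPart_eq_self.2 hfx.le] using (le_abs_self _).trans hx
    · simp [χ, hfx, posPart_eq_zero.2 (not_lt.1 hfx)]
  have hneg : ∀ᵐ x ∂μ, T (hf.neg_part.toL1 fun x => (f x)⁻) x + C * g x ≤ C := by
    refine ae_add_const_mul_le_of_ae_add_const_mul_le hTmax _ _ ?_
    filter_upwards [hfC] with x hx
    by_cases hfx : 0 < f x
    · simp [χ, hfx, negPart_eq_zero.2 hfx.le]
    · simpa [χ, hfx, negPart_eq_neg.2 (not_lt.1 hfx)] using (neg_le_abs _).trans hx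
  filter_upwards [hpos, hneg, ae_posPart_sub_negPart_eq_const_mul hf heig] with x hPx hNx hPNx
  by_cases hfx : 0 < f x
  · rw [Set.indicator_of_mem (s := {x | 0 < f x}) hfx, posPart_eq_self.2 hfx.le, ← hPNx]
    linarith [mul_le_mul_of_nonneg_left (le_abs_self (1 - g x)) hC]
  · rw [Set.indicator_of_notMem (s := {x | 0 < f x}) hfx, posPart_eq_zero.2 (not_lt.1 hfx),
      zero_sub, abs_neg]
    linarith [mul_le_mul_of_nonneg_left (le_abs_self (g x)) hC]

theorem one_sub_mul_integral_posPart_le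
    (hTpos : ∀ u : Lp ℝ 1 μ, (0 : X → ℝ) ≤ᵐ[μ] ⇑u → (0 : X → ℝ) ≤ᵐ[μ] ⇑(T u))
    (hTmass : ∀ u : Lp ℝ 1 μ, ∫ x, (T u) x ∂μ = ∫ x, u x ∂μ)
    (hTmax : ∀ (β : ℝ) (u : Lp ℝ 1 μ), ⇑u ≤ᵐ[μ] (fun _ => β) → ⇑(T u) ≤ᵐ[μ] (fun _ => β))
    {f : X → ℝ} (hf : Integrable f μ) {C : ℝ} (hC : 0 ≤ C) (hfC : ∀ᵐ x ∂μ, |f x| ≤ C)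
    {a : ℝ} (heig : ⇑(T (hf.toL1 f)) =ᵐ[μ] fun x => a * f x)
    (hχ : Integrable (({x | 0 < f x}).indicator (fun _ => (1 : ℝ))) μ) :
    (1 - a) * ∫ x, (f x)⁺ ∂μ ≤
      C * ∫ x, |({x | 0 < f x}).indicator (fun _ => (1 : ℝ)) x - (T (hχ.toL1 _)) x| ∂μ := by
  have hpos : Integrable (fun x => (f x)⁺) μ := hf.pos_part
  have hmass : ∫ x, T (hpos.toL1 _) x ∂μ = ∫ x, (f x)⁺ ∂μ := by
    rw [hTmass]; exact integral_congr_ae hpos.coeFn_toL1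
  calc (1 - a) * ∫ x, (f x)⁺ ∂μ = ∫ x, (T (hpos.toL1 _) x - a * (f x)⁺) ∂μ := by
        rw [integral_sub (L1.integrable_coeFn _) (hpos.const_mul a), integral_const_mul, hmass]
        ring
    _ ≤ _ := integral_mono_ae ((L1.integrable_coeFn _).sub (hpos.const_mul a))
          ((hχ.sub (L1.integrable_coeFn _)).abs.const_mul C)
          (ae_sub_mul_posPart_le_mul_abs_indicator_sub hTpos hTmax hf hC hfC heig hχ)
    _ = _ := integral_const_mul C _

lemma ofReal_mul_eLpNorm_top_le {θ : ℝ}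
    (hultra : ∀ u : Lp ℝ 1 μ, eLpNorm (⇑(T u)) ⊤ μ ≤ ENNReal.ofReal (θ * ∫ x, |u x| ∂μ))
    {f : X → ℝ} (hf : Integrable f μ) {a : ℝ} (ha : 0 ≤ a)
    (heig : ⇑(T (hf.toL1 f)) =ᵐ[μ] fun x => a * f x) :
    ENNReal.ofReal a * eLpNorm f ⊤ μ ≤ ENNReal.ofReal (θ * ∫ x, |f x| ∂μ) := by
  have h := hultra (hf.toL1 f)
  have habs : ∫ x, |hf.toL1 f x| ∂μ = ∫ x, |f x| ∂μ :=
    integral_congr_ae (hf.coeFn_toL1.fun_comp abs)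
  rwa [eLpNorm_congr_ae heig, habs,
    show (fun x => a * f x) = a • f from rfl, eLpNorm_const_smul, Real.enorm_eq_ofReal ha] at h

end PositiveOperator

lemma mul_one_sub_sq_div_le {a θ J C K : ℝ} (ha0 : 0 < a) (ha1 : a < 1) (hθ : 0 < θ)
    (hJ : 0 < J) (hC : 0 ≤ C) (hJC : (1 - a) * J ≤ C * K) (hCJ : a * C ≤ θ * (2 * J)) :
    a * (1 - a) ^ 2 / (4 * θ) ≤ K := by
  have hK : 0 < K := pos_of_mul_pos_right ((mul_pos (sub_pos.2 ha1) hJ).trans_le hJC) hC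
  have hgap : a * (1 - a) ≤ 2 * θ * K := by
    refine le_of_mul_le_mul_right ?_ hJ
    calc a * (1 - a) * J ≤ a * (C * K) := by
          rw [mul_assoc]; exact mul_le_mul_of_nonneg_left hJC ha0.le
      _ = a * C * K := by ring
      _ ≤ θ * (2 * J) * K := mul_le_mul_of_nonneg_right hCJ hK.le
      _ = 2 * θ * K * J := by ring
  rw [div_le_iff₀ (by positivity)]
  nlinarith [mul_pos ha0 (sub_pos.2 ha1)]

theorem stmt11_general {X : Type*} [MeasurableSpace X]
    (μ : Measure X)
    (T : Lp ℝ 1 μ →ₗ[ℝ] Lp ℝ 1 μ)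
    (hTpos : ∀ u : Lp ℝ 1 μ, (0 : X → ℝ) ≤ᵐ[μ] ⇑u → (0 : X → ℝ) ≤ᵐ[μ] ⇑(T u))
    (hTmass : ∀ u : Lp ℝ 1 μ, ∫ x, (T u) x ∂μ = ∫ x, u x ∂μ)
    (hTmax : ∀ (β : ℝ) (u : Lp ℝ 1 μ),
      ⇑u ≤ᵐ[μ] (fun _ => β) → ⇑(T u) ≤ᵐ[μ] (fun _ => β))
    (θ : ℝ) (hθ : 0 < θ)
    (hultra : ∀ u : Lp ℝ 1 μ,
      eLpNorm (⇑(T u)) ⊤ μ ≤ ENNReal.ofReal (θ * ∫ x, |u x| ∂μ))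
    (f : X → ℝ) (hf1 : Integrable f μ)
    (hfpos : 0 < ∫ x, |f x| ∂μ)
    (lam t : ℝ) (hlam : 0 < lam) (ht : 0 < t)
    (heig : ⇑(T (hf1.toL1 f)) =ᵐ[μ] fun x => Real.exp (-(lam * t)) * f x)
    (hχA : Integrable (({x | 0 < f x}).indicator (fun _ => (1 : ℝ))) μ)
    (K : ℝ)
    (hK : ∫ x, |({x | 0 < f x}).indicator (fun _ => (1 : ℝ)) x - (T (hχA.toL1 _)) x| ∂μ ≤ K) :
    Real.exp (-(lam * t)) * (1 - Real.exp (-(lam * t))) ^ 2 / (4 * θ) ≤ K := by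
  set a := Real.exp (-(lam * t))
  have ha0 : 0 < a := Real.exp_pos _
  have ha1 : a < 1 := Real.exp_lt_one_iff.2 (neg_neg_of_pos (mul_pos hlam ht))
  have hsup := ofReal_mul_eLpNorm_top_le hultra hf1 ha0.le heig
  have hfin : eLpNorm f ⊤ μ ≠ ⊤ := fun h => by
    simp [h, ENNReal.ofReal_pos.2 ha0 |>.ne'] at hsup
  set C := (eLpNorm f ⊤ μ).toReal
  have hCJ : a * C ≤ θ * ∫ x, |f x| ∂μ := by
    have := ENNReal.toReal_mono ENNReal.ofReal_ne_top hsup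
    rwa [ENNReal.toReal_mul, ENNReal.toReal_ofReal ha0.le,
      ENNReal.toReal_ofReal (mul_pos hθ hfpos).le] at this
  have habs : ∫ x, |f x| ∂μ = 2 * ∫ x, (f x)⁺ ∂μ := by
    rw [integral_abs_eq_two_mul_integral_posPart_sub_integral hf1,
      integral_eq_zero_of_ae_eq_const_mul hTmass hf1 ha1.ne heig, sub_zero]
  have hJC := (one_sub_mul_integral_posPart_le hTpos hTmass hTmax hf1 ENNReal.toReal_nonneg
    (ae_abs_le_toReal_eLpNorm_top hfin) heig hχA).trans
    (mul_le_mul_of_nonneg_left hK ENNReal.toReal_nonneg)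
  rw [habs] at hfpos hCJ
  exact mul_one_sub_sq_div_le ha0 ha1 hθ (by linarith) ENNReal.toReal_nonneg hJC hCJ

/-- Corollary res:ultrac_nodal.
Let `μ` be a finite Borel measure on a metric space and `T : L¹ → L¹` linear,
positivity-preserving, mass-preserving, satisfying the maximum principle, and
`θ`-ultracontractive (`‖Tu‖_∞ ≤ θ·‖u‖_₁`). Let `f ∈ L∞` with `‖f‖_₁ > 0`, `λ, t > 0`
with `Tf = e^{−λt}·f` a.e., and `K ≥ 0` with `‖χ_{{f>0}} − T(χ_{{f>0}})‖_{L¹} ≤ K`.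
Then `K ≥ e^{−λt}(1 − e^{−λt})²/(4θ)`. -/
theorem stmt11 {X : Type*} [MetricSpace X] [MeasurableSpace X] [BorelSpace X]
    (μ : Measure X) [IsFiniteMeasure μ]
    (T : Lp ℝ 1 μ →ₗ[ℝ] Lp ℝ 1 μ)
    (hTpos : ∀ u : Lp ℝ 1 μ, (0 : X → ℝ) ≤ᵐ[μ] ⇑u → (0 : X → ℝ) ≤ᵐ[μ] ⇑(T u))
    (hTmass : ∀ u : Lp ℝ 1 μ, ∫ x, (T u) x ∂μ = ∫ x, u x ∂μ)
    (hTmax : ∀ (β : ℝ) (u : Lp ℝ 1 μ),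
      ⇑u ≤ᵐ[μ] (fun _ => β) → ⇑(T u) ≤ᵐ[μ] (fun _ => β))
    (θ : ℝ) (hθ : 0 < θ)
    (hultra : ∀ u : Lp ℝ 1 μ,
      eLpNorm (⇑(T u)) ⊤ μ ≤ ENNReal.ofReal (θ * ∫ x, |u x| ∂μ))
    (f : X → ℝ) (hfm : MemLp f ⊤ μ) (hf1 : Integrable f μ)
    (hfpos : 0 < ∫ x, |f x| ∂μ)
    (lam t : ℝ) (hlam : 0 < lam) (ht : 0 < t)
    (heig : ⇑(T (hf1.toL1 f)) =ᵐ[μ] fun x => Real.exp (-(lam * t)) * f x)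
    (hχA : Integrable (({x | 0 < f x}).indicator (fun _ => (1 : ℝ))) μ)
    (K : ℝ) (hK0 : 0 ≤ K)
    (hK : ∫ x, |({x | 0 < f x}).indicator (fun _ => (1 : ℝ)) x - (T (hχA.toL1 _)) x| ∂μ ≤ K) :
    Real.exp (-(lam * t)) * (1 - Real.exp (-(lam * t))) ^ 2 / (4 * θ) ≤ K :=
  stmt11_general μ T hTpos hTmass hTmax θ hθ hultra f hf1 hfpos lam t hlam ht heig hχA K hK
end
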